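/- arXiv:2409.18915 — 4 statements merged into one kernel-verified Lean document; each statement's English description precedes it below -/
import Mathlib

section
/- Under the same recursion as the previous lemma but where at each local step the differing sample is selected with probability 1/S (incurring an extra additive term 2ηG) and otherwise the same sample is used, the final local-update difference satisfies E‖(θ_{i,K} − θ) − (θ̂_{i,K} − θ̂)‖ ≤ ηKL·E‖θ − θ̂‖ + ηK·E‖λ_i − λ̂_i‖ + 2ηKG/S. -/
/-- The mixed recursion on the expected local-update difference,
where at each step the differing sample is drawn with probability `1/S` (contributing
an additive `2ηG/S` term): `a_{k+1} ≤ (1 − ηρ_L)a_k + ηLΔ + ησ + 2ηG/S` with `a_0 = 0`,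
yields `a_K ≤ ηKLΔ + ηKσ + 2ηKG/S`. -/
theorem stmt_5 (η ρL L G S Δ σ : ℝ) (K : ℕ)
    (hη : 0 < η) (hlo : 0 < η * ρL) (hhi : η * ρL ≤ 1)
    (hΔ : 0 ≤ Δ) (hσ : 0 ≤ σ) (hG : 0 ≤ G) (hL : 0 ≤ L) (hS : 0 < S)
    (a : ℕ → ℝ) (ha0 : a 0 = 0) (hnn : ∀ k, 0 ≤ a k)
    (hrec : ∀ k < K, a (k + 1) ≤ (1 - η * ρL) * a k + η * L * Δ + η * σ + 2 * η * G / S) :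
    a K ≤ η * K * L * Δ + η * K * σ + 2 * η * K * G / S := by
  have key : ∀ k ≤ K, a k ≤ k * (η * L * Δ + η * σ + 2 * η * G / S) := by
    intro k hk
    induction k with
    | zero => simp [ha0]
    | succ n ih =>
      have hn : n ≤ K := Nat.le_of_succ_le hk
      have ihn := ih hn
      have h1 : (1 - η * ρL) * a n ≤ a n := by
        nlinarith [hnn n]
      have := hrec n (Nat.lt_of_succ_le hk)
      push_cast
      nlinarith [hnn n]
  calc a K ≤ K * (η * L * Δ + η * σ + 2 * η * G / S) := key K le_rfl
    _ = η * K * L * Δ + η * K * σ + 2 * η * K * G / S := by ring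
end

section
/- Suppose nonnegative sequences Δ^t, σ^t, δ^t, π^t satisfy: Δ^{t+1} ≤ δ^{t+1} + σ^{t+1}/ρ; σ^{t+1} ≤ σ^t + ρπ^{t+1}; δ^{t+1} ≤ π^{t+1} + Δ^t; and π^{t+1} ≤ c₁Δ^t + c₂σ^t + c₃ with c₁ = ηKL, c₂ = ηK, c₃ = 2ηKG/(CS). Then for any α > 0 with α − 1/ρ ≥ (α + (1+αρ)ηK)/(1 + (1+αρ)ηKL), setting γ = 1 + αρ and α_ρ = α − 1/ρ, one has Δ^{t+1} + α_ρ σ^{t+1} ≤ (1 + γηKL)(Δ^t + α_ρ σ^t) + 2γηKG/(CS). -/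
/-- Combining the four recursive inequalities with multipliers
`β = 1`, `γ = 1 + αρ` (with `c₁ = ηKL`, `c₂ = ηK`, `c₃ = 2ηKG/(CS)`), and assuming
`α − 1/ρ ≥ (α + (1+αρ)ηK)/(1 + (1+αρ)ηKL)`, one obtains
`Δ^{t+1} + α_ρ σ^{t+1} ≤ (1 + γηKL)(Δ^t + α_ρ σ^t) + 2γηKG/(CS)`. -/
theorem stmt_6 (ρ η K L G C S α : ℝ)
    (hρ : 0 < ρ) (hη : 0 < η) (hK : 0 < K) (hL : 0 < L) (hG : 0 < G)
    (hC : 0 < C) (hS : 0 < S) (hα : 0 < α)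
    (Del Sig del pi : ℕ → ℝ)
    (hDel : ∀ t, 0 ≤ Del t) (hSig : ∀ t, 0 ≤ Sig t)
    (hdel : ∀ t, 0 ≤ del t) (hpi : ∀ t, 0 ≤ pi t)
    (h1 : ∀ t, Del (t + 1) ≤ del (t + 1) + Sig (t + 1) / ρ)
    (h2 : ∀ t, Sig (t + 1) ≤ Sig t + ρ * pi (t + 1))
    (h3 : ∀ t, del (t + 1) ≤ pi (t + 1) + Del t)
    (h4 : ∀ t, pi (t + 1) ≤ η * K * L * Del t + η * K * Sig t + 2 * η * K * G / (C * S))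
    (hcond : (α + (1 + α * ρ) * η * K) / (1 + (1 + α * ρ) * η * K * L) ≤ α - 1 / ρ) :
    ∀ t, Del (t + 1) + (α - 1 / ρ) * Sig (t + 1)
      ≤ (1 + (1 + α * ρ) * η * K * L) * (Del t + (α - 1 / ρ) * Sig t)
        + 2 * (1 + α * ρ) * η * K * G / (C * S) := by
  intro t
  have hden : (0:ℝ) < 1 + (1 + α * ρ) * η * K * L := by positivity
  have hcond' : α + (1 + α * ρ) * η * K ≤ (α - 1 / ρ) * (1 + (1 + α * ρ) * η * K * L) :=
    (div_le_iff₀ hden).mp hcond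
  have e1 := h1 t
  have e2 := h2 t
  have e3 := h3 t
  have e4 := h4 t
  have hid : del (t + 1) + Sig (t + 1) / ρ + (α - 1 / ρ) * Sig (t + 1)
      = del (t + 1) + α * Sig (t + 1) := by field_simp; ring
  have mα : α * Sig (t + 1) ≤ α * Sig t + α * ρ * pi (t + 1) := by
    nlinarith [mul_le_mul_of_nonneg_left e2 hα.le]
  have key : Del (t + 1) + (α - 1 / ρ) * Sig (t + 1)
      ≤ Del t + α * Sig t + (1 + α * ρ) * pi (t + 1) := by nlinarith [e1, e3, hid, mα]
  have hγ : (0:ℝ) ≤ 1 + α * ρ := by positivity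
  have step : (1 + α * ρ) * pi (t + 1)
      ≤ (1 + α * ρ) * (η * K * L * Del t + η * K * Sig t + 2 * η * K * G / (C * S)) :=
    mul_le_mul_of_nonneg_left e4 hγ
  have final : Del t + α * Sig t
        + (1 + α * ρ) * (η * K * L * Del t + η * K * Sig t + 2 * η * K * G / (C * S))
      ≤ (1 + (1 + α * ρ) * η * K * L) * (Del t + (α - 1 / ρ) * Sig t)
        + 2 * (1 + α * ρ) * η * K * G / (C * S) := by
    have h5 := mul_le_mul_of_nonneg_right hcond' (hSig t)
    have hring : (1 + (1 + α * ρ) * η * K * L) * (Del t + (α - 1 / ρ) * Sig t)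
          + 2 * (1 + α * ρ) * η * K * G / (C * S)
        - (Del t + α * Sig t
          + (1 + α * ρ) * (η * K * L * Del t + η * K * Sig t + 2 * η * K * G / (C * S)))
        = (α - 1 / ρ) * (1 + (1 + α * ρ) * η * K * L) * Sig t
          - (α + (1 + α * ρ) * η * K) * Sig t := by ring
    linarith [h5, hring]
  calc Del (t + 1) + (α - 1 / ρ) * Sig (t + 1)
      ≤ Del t + α * Sig t + (1 + α * ρ) * pi (t + 1) := key
    _ ≤ Del t + α * Sig t
        + (1 + α * ρ) * (η * K * L * Del t + η * K * Sig t + 2 * η * K * G / (C * S)) := by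
        linarith [step]
    _ ≤ _ := final
end

section
/- If nonnegative e_t satisfies e_{t+1} ≤ (1 + γη₀KL/(t+1)) e_t + 2γη₀KG/(CS(t+1)) for t ≥ τ₀ ≥ 1 with e_{τ₀} = 0 and η₀ ≤ μ/(γK) for a constant μ > 0, then e_T ≤ (2G/(L·C·S))·(T/τ₀)^{μL}. -/
/-! With `A = 2G/(LCS)`, `c = γη₀KL` and `a = μL ≥ c`, the function `A ((t/τ₀)^a - 1)` is a
supersolution of the recursion that vanishes at `τ₀`: the forcing term `A c/(t+1)` exactly cancels
the `-1` multiplied by `c/(t+1)`, and the growth factor satisfies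
`1 + c/(t+1) ≤ exp (a/(t+1)) ≤ ((t+1)/t)^a` since `log (1 + 1/t) ≥ 1/(t+1)`. -/

open Real

lemma one_add_div_succ_le_rpow {x a : ℝ} (hx : 0 < x) (ha : 0 ≤ a) :
    1 + a / (x + 1) ≤ ((x + 1) / x) ^ a := by
  have hlog : 1 / (x + 1) ≤ log ((x + 1) / x) := by
    have h := one_sub_inv_le_log_of_pos (show 0 < (x + 1) / x by positivity)
    rwa [inv_div, show 1 - x / (x + 1) = 1 / (x + 1) by field_simp; ring] at h
  calc 1 + a / (x + 1) ≤ exp (a / (x + 1)) := by linarith [add_one_le_exp (a / (x + 1))]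
    _ ≤ exp (log ((x + 1) / x) * a) := by
      rw [exp_le_exp, div_eq_mul_one_div, mul_comm]
      gcongr
    _ = ((x + 1) / x) ^ a := (rpow_def_of_pos (by positivity) a).symm

lemma le_mul_rpow_sub_one_of_recurrence {e : ℕ → ℝ} {τ₀ : ℕ} {a c A : ℝ} (hτ₀ : 0 < τ₀)
    (hc : 0 ≤ c) (hca : c ≤ a) (hA : 0 ≤ A) (he : e τ₀ ≤ 0)
    (hrec : ∀ t, τ₀ ≤ t → e (t + 1) ≤ (1 + c / ((t : ℝ) + 1)) * e t + A * c / ((t : ℝ) + 1))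
    {T : ℕ} (hT : τ₀ ≤ T) :
    e T ≤ A * (((T : ℝ) / τ₀) ^ a - 1) := by
  induction T, hT using Nat.le_induction with
  | base => simpa [div_self (Nat.cast_pos.mpr hτ₀ : (0 : ℝ) < τ₀).ne'] using he
  | succ t ht ih =>
    have ht₀ : (0 : ℝ) < t := by exact_mod_cast hτ₀.trans_le ht
    have hgrowth : (1 + c / ((t : ℝ) + 1)) * ((t : ℝ) / τ₀) ^ a ≤ (((t : ℝ) + 1) / τ₀) ^ a :=
      calc (1 + c / ((t : ℝ) + 1)) * ((t : ℝ) / τ₀) ^ a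
          ≤ (((t : ℝ) + 1) / t) ^ a * ((t : ℝ) / τ₀) ^ a := by
            gcongr
            exact (by gcongr : 1 + c / ((t : ℝ) + 1) ≤ 1 + a / ((t : ℝ) + 1)).trans
              (one_add_div_succ_le_rpow ht₀ (hc.trans hca))
        _ = (((t : ℝ) + 1) / τ₀) ^ a := by
            rw [← mul_rpow (by positivity) (by positivity)]
            congr 1
            field_simp
    push_cast
    calc e (t + 1) ≤ (1 + c / ((t : ℝ) + 1)) * e t + A * c / ((t : ℝ) + 1) := hrec t ht
      _ ≤ (1 + c / ((t : ℝ) + 1)) * (A * (((t : ℝ) / τ₀) ^ a - 1)) + A * c / ((t : ℝ) + 1) := by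
          gcongr
      _ = A * ((1 + c / ((t : ℝ) + 1)) * ((t : ℝ) / τ₀) ^ a - 1) := by ring
      _ ≤ A * ((((t : ℝ) + 1) / τ₀) ^ a - 1) := by gcongr

theorem stmt_9_general (γ η₀ L K G C S μ : ℝ) (τ₀ T : ℕ)
    (hγ : 1 ≤ γ) (hη₀ : 0 < η₀) (hL : 0 < L) (hK : 0 < K) (hG : 0 < G)
    (hC : 0 < C) (hS : 0 < S) (hstep : η₀ ≤ μ / (γ * K))
    (hτ₀ : 1 ≤ τ₀) (hT : τ₀ ≤ T)
    (e : ℕ → ℝ) (he0 : e τ₀ = 0)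
    (hrec : ∀ t, τ₀ ≤ t →
      e (t + 1) ≤ (1 + γ * η₀ * K * L / ((t : ℝ) + 1)) * e t
                    + 2 * γ * η₀ * K * G / (C * S * ((t : ℝ) + 1))) :
    e T ≤ (2 * G / (L * C * S)) * ((T : ℝ) / (τ₀ : ℝ)) ^ (μ * L) := by
  have hγK : 0 < γ * K := by positivity
  have hc : 0 ≤ γ * η₀ * K * L := by positivity
  have hca : γ * η₀ * K * L ≤ μ * L := by
    have := (le_div_iff₀' hγK).mp hstep
    nlinarith
  have hA : 0 ≤ 2 * G / (L * C * S) := by positivity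
  have hforcing : ∀ t : ℕ, 2 * γ * η₀ * K * G / (C * S * ((t : ℝ) + 1))
      = 2 * G / (L * C * S) * (γ * η₀ * K * L) / ((t : ℝ) + 1) := by
    intro t
    field_simp
  calc e T ≤ 2 * G / (L * C * S) * (((T : ℝ) / τ₀) ^ (μ * L) - 1) :=
        le_mul_rpow_sub_one_of_recurrence hτ₀ hc hca hA he0.le
          (fun t ht => hforcing t ▸ hrec t ht) hT
    _ ≤ 2 * G / (L * C * S) * ((T : ℝ) / τ₀) ^ (μ * L) := by linarith

/-- Decayed step-size recursion
`e_{t+1} ≤ (1 + γη₀KL/(t+1))e_t + 2γη₀KG/(CS(t+1))` for `t ≥ τ₀ ≥ 1`, with `e_{τ₀} = 0`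
and `η₀ ≤ μ/(γK)`, gives `e_T ≤ (2G/(LCS))·(T/τ₀)^{μL}`. -/
theorem stmt_9 (γ η₀ L K G C S μ : ℝ) (τ₀ T : ℕ)
    (hγ : 1 ≤ γ) (hη₀ : 0 < η₀) (hL : 0 < L) (hK : 0 < K) (hG : 0 < G)
    (hC : 0 < C) (hS : 0 < S) (hμ : 0 < μ) (hstep : η₀ ≤ μ / (γ * K))
    (hτ₀ : 1 ≤ τ₀) (hT : τ₀ ≤ T)
    (e : ℕ → ℝ) (he0 : e τ₀ = 0) (hnn : ∀ t, 0 ≤ e t)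
    (hrec : ∀ t, τ₀ ≤ t →
      e (t + 1) ≤ (1 + γ * η₀ * K * L / ((t : ℝ) + 1)) * e t
                    + 2 * γ * η₀ * K * G / (C * S * ((t : ℝ) + 1))) :
    e T ≤ (2 * G / (L * C * S)) * ((T : ℝ) / (τ₀ : ℝ)) ^ (μ * L) :=
  stmt_9_general γ η₀ L K G C S μ τ₀ T hγ hη₀ hL hK hG hC hS hstep hτ₀ hT e he0 hrec
end

section
/- Let f = (1/C)Σ_i f_i with each f_i L-smooth, and suppose each local solution satisfies the first-order stationarity condition ∇f_i(θ_i^{t+1}) + λ_i^t + ρ(θ_i^{t+1} − θ^t) = e_i with ‖e_i‖² ≤ ε, and the global update is θ̄^{t+1} = (1/C)Σ_i θ_i^{t+1} with (1/C)Σ_i λ_i^t = λ̄^t and θ^t = θ̄^t + λ̄^t/ρ. Then E_t[f(θ̄^{t+1})] − f(θ̄^t) ≤ (L/2)(1 + L/ρ)·(1/C)Σ_i E_t‖θ̄^t − θ_i^{t+1}‖² − (1/(2ρ))·E_t‖∇f(θ̄^t)‖². -/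
/-!
Averaging the local stationarity conditions and substituting `θ^t = θ̄^t + λ̄^t/ρ` cancels the
dual variables: the server update is the gradient-like step `θ̄^{t+1} - θ̄^t = -ρ⁻¹ Ḡ`, where `Ḡ`
averages the local gradients at the local solutions. The descent lemma for the `L`-smooth average
objective bounds the progress by `⟪∇f(θ̄^t), θ̄^{t+1} - θ̄^t⟫ + L/2 ‖θ̄^{t+1} - θ̄^t‖²`. Polarization
turns the inner product into `-(1/2ρ)‖∇f(θ̄^t)‖² + (1/2ρ)‖∇f(θ̄^t) - Ḡ‖²` up to the nonpositive
term `-(1/2ρ)‖Ḡ‖²`. Finally Jensen's inequality with `L`-smoothness bounds `‖∇f(θ̄^t) - Ḡ‖²` by `L²`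
times the mean squared distance `(1/C) Σ_i ‖θ̄^t - θ_i^{t+1}‖²`, and `‖θ̄^{t+1} - θ̄^t‖²` by that
distance itself.
-/

open Finset RealInnerProductSpace

variable {E : Type*} [NormedAddCommGroup E] [InnerProductSpace ℝ E]

theorem le_add_inner_add_of_lipschitz_gradient [CompleteSpace E] {f : E → ℝ} {gf : E → E}
    {L : ℝ} (hgrad : ∀ x, HasGradientAt f (gf x) x)
    (hLip : ∀ x y, ‖gf x - gf y‖ ≤ L * ‖x - y‖) (x y : E) :
    f y ≤ f x + ⟪gf x, y - x⟫ + L / 2 * ‖y - x‖ ^ 2 := by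
  set v := y - x
  -- `f` along the segment minus its quadratic upper model is antitone on `[0, 1]`.
  let ψ : ℝ → ℝ := fun t => f (x + t • v) - t * ⟪gf x, v⟫ - L / 2 * ‖v‖ ^ 2 * t ^ 2
  have hψ : ∀ t, HasDerivAt ψ (⟪gf (x + t • v) - gf x, v⟫ - L * ‖v‖ ^ 2 * t) t := by
    intro t
    have hline : HasDerivAt (fun t : ℝ => x + t • v) v t := by
      simpa using ((hasDerivAt_id t).smul_const v).const_add x
    have hf : HasDerivAt (fun t : ℝ => f (x + t • v)) ⟪gf (x + t • v), v⟫ t := by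
      simpa [Function.comp_def] using (hgrad _).hasFDerivAt.comp_hasDerivAt t hline
    refine ((hf.sub (hasDerivAt_mul_const _)).sub
      ((hasDerivAt_pow 2 t).const_mul _)).congr_deriv ?_
    rw [inner_sub_left]
    ring
  have hψ_nonpos : ∀ t, 0 < t → ⟪gf (x + t • v) - gf x, v⟫ - L * ‖v‖ ^ 2 * t ≤ 0 := by
    intro t ht
    have hgap := hLip (x + t • v) x
    rw [add_sub_cancel_left, norm_smul, Real.norm_of_nonneg ht.le] at hgap
    have := mul_le_mul_of_nonneg_right hgap (norm_nonneg v)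
    nlinarith [real_inner_le_norm (gf (x + t • v) - gf x) v]
  have hanti : AntitoneOn ψ (Set.Icc 0 1) := by
    refine antitoneOn_of_deriv_nonpos (convex_Icc 0 1)
      (fun t _ => (hψ t).continuousAt.continuousWithinAt)
      (fun t _ => (hψ t).differentiableAt.differentiableWithinAt) fun t ht => ?_
    rw [interior_Icc] at ht
    rw [(hψ t).deriv]
    exact hψ_nonpos t ht.1
  have h10 : ψ 1 ≤ ψ 0 := hanti (by simp) (by simp) zero_le_one
  simp only [ψ, v, zero_smul, one_smul, add_zero, add_sub_cancel, zero_mul, one_mul, mul_one,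
    one_pow, ne_eq, two_ne_zero, not_false_eq_true, zero_pow, mul_zero, sub_zero] at h10
  linarith

theorem inner_neg_inv_smul_le {ρ : ℝ} (hρ : 0 < ρ) (g G : E) :
    ⟪g, -(ρ⁻¹ • G)⟫ ≤ -(1 / (2 * ρ)) * ‖g‖ ^ 2 + 1 / (2 * ρ) * ‖g - G‖ ^ 2 := by
  rw [inner_neg_right, real_inner_smul_right, norm_sub_sq_real]
  have hG : 0 ≤ 1 / (2 * ρ) * ‖G‖ ^ 2 := by positivity
  have hpol : -(1 / (2 * ρ)) * ‖g‖ ^ 2 + 1 / (2 * ρ) * (‖g‖ ^ 2 - 2 * ⟪g, G⟫ + ‖G‖ ^ 2)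
      = -(ρ⁻¹ * ⟪g, G⟫) + 1 / (2 * ρ) * ‖G‖ ^ 2 := by ring
  linarith

section Average

variable {ι : Type*} [Fintype ι]

theorem sq_norm_average_le (v : ι → E) :
    ‖(Fintype.card ι : ℝ)⁻¹ • ∑ i, v i‖ ^ 2 ≤ (Fintype.card ι : ℝ)⁻¹ * ∑ i, ‖v i‖ ^ 2 := by
  set n : ℝ := (Fintype.card ι : ℝ)
  have hcs : ‖∑ i, v i‖ ^ 2 ≤ n * ∑ i, ‖v i‖ ^ 2 :=
    calc ‖∑ i, v i‖ ^ 2 ≤ (∑ i, ‖v i‖) ^ 2 := by gcongr; exact norm_sum_le _ _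
      _ ≤ n * ∑ i, ‖v i‖ ^ 2 := by
        simpa using sq_sum_le_card_mul_sum_sq (s := univ) (f := fun i => ‖v i‖)
  rw [norm_smul, mul_pow, norm_inv, Real.norm_natCast]
  calc n⁻¹ ^ 2 * ‖∑ i, v i‖ ^ 2 ≤ n⁻¹ ^ 2 * (n * ∑ i, ‖v i‖ ^ 2) := by gcongr
    _ = n⁻¹ * ∑ i, ‖v i‖ ^ 2 := by
      rcases eq_or_ne n 0 with hn | hn
      · simp [hn]
      · field_simp

theorem average_sub_average_le_of_lipschitz_gradient [CompleteSpace E] [Nonempty ι]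
    {f : ι → E → ℝ} {gf : ι → E → E} {L : ℝ} (hgrad : ∀ i x, HasGradientAt (f i) (gf i x) x)
    (hLip : ∀ i x y, ‖gf i x - gf i y‖ ≤ L * ‖x - y‖) (x y : E) :
    (Fintype.card ι : ℝ)⁻¹ * ∑ i, f i y - (Fintype.card ι : ℝ)⁻¹ * ∑ i, f i x
      ≤ ⟪(Fintype.card ι : ℝ)⁻¹ • ∑ i, gf i x, y - x⟫ + L / 2 * ‖y - x‖ ^ 2 := by
  set n : ℝ := (Fintype.card ι : ℝ)
  have hn : 0 < n := Nat.cast_pos.mpr Fintype.card_pos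
  have hsum := sum_le_sum fun i (_ : i ∈ univ) =>
    le_add_inner_add_of_lipschitz_gradient (hgrad i) (hLip i) x y
  rw [sum_add_distrib, sum_add_distrib, ← sum_inner, sum_const, card_univ, nsmul_eq_mul] at hsum
  calc n⁻¹ * ∑ i, f i y - n⁻¹ * ∑ i, f i x = n⁻¹ * (∑ i, f i y - ∑ i, f i x) := by ring
    _ ≤ n⁻¹ * (⟪∑ i, gf i x, y - x⟫ + n * (L / 2 * ‖y - x‖ ^ 2)) := by gcongr; linarith
    _ = ⟪n⁻¹ • ∑ i, gf i x, y - x⟫ + L / 2 * ‖y - x‖ ^ 2 := by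
      rw [real_inner_smul_left]
      field_simp

theorem sq_norm_average_sub_average_le {gf : ι → E → E} {L : ℝ}
    (hLip : ∀ i x y, ‖gf i x - gf i y‖ ≤ L * ‖x - y‖) (x : E) (θ : ι → E) :
    ‖(Fintype.card ι : ℝ)⁻¹ • ∑ i, gf i x - (Fintype.card ι : ℝ)⁻¹ • ∑ i, gf i (θ i)‖ ^ 2
      ≤ L ^ 2 * ((Fintype.card ι : ℝ)⁻¹ * ∑ i, ‖x - θ i‖ ^ 2) := by
  rw [← smul_sub, ← sum_sub_distrib]
  calc _ ≤ (Fintype.card ι : ℝ)⁻¹ * ∑ i, ‖gf i x - gf i (θ i)‖ ^ 2 := sq_norm_average_le _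
    _ ≤ (Fintype.card ι : ℝ)⁻¹ * ∑ i, (L * ‖x - θ i‖) ^ 2 := by
      gcongr with i
      exact hLip i x (θ i)
    _ = L ^ 2 * ((Fintype.card ι : ℝ)⁻¹ * ∑ i, ‖x - θ i‖ ^ 2) := by
      simp_rw [mul_pow, ← mul_sum]
      ring

theorem sq_norm_average_sub_le [Nonempty ι] (x : E) (θ : ι → E) :
    ‖(Fintype.card ι : ℝ)⁻¹ • ∑ i, θ i - x‖ ^ 2 ≤ (Fintype.card ι : ℝ)⁻¹ * ∑ i, ‖x - θ i‖ ^ 2 := by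
  have hn : (Fintype.card ι : ℝ) ≠ 0 := Nat.cast_ne_zero.mpr Fintype.card_ne_zero
  have hcenter : (Fintype.card ι : ℝ)⁻¹ • ∑ i, θ i - x
      = (Fintype.card ι : ℝ)⁻¹ • ∑ i, (θ i - x) := by
    rw [sum_sub_distrib, smul_sub, sum_const, card_univ, ← Nat.cast_smul_eq_nsmul ℝ, smul_smul,
      inv_mul_cancel₀ hn, one_smul]
  rw [hcenter]
  simpa only [norm_sub_rev] using sq_norm_average_le fun i => θ i - x

theorem average_sub_eq_neg_inv_smul_average_of_stationary [Nonempty ι] {ρ : ℝ} (hρ : ρ ≠ 0)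
    {g θ lam : ι → E} {θt θbar θbar' : E} (hfoc : ∀ i, g i + lam i + ρ • (θ i - θt) = 0)
    (hθt : θt = θbar + ρ⁻¹ • ((Fintype.card ι : ℝ)⁻¹ • ∑ i, lam i))
    (hbar' : θbar' = (Fintype.card ι : ℝ)⁻¹ • ∑ i, θ i) :
    θbar' - θbar = -(ρ⁻¹ • ((Fintype.card ι : ℝ)⁻¹ • ∑ i, g i)) := by
  have hn : (Fintype.card ι : ℝ) ≠ 0 := Nat.cast_ne_zero.mpr Fintype.card_ne_zero
  have hsum : ∑ i, g i + ∑ i, lam i + ρ • (∑ i, θ i - (Fintype.card ι : ℝ) • θt) = 0 := by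
    rw [← Fintype.sum_eq_zero _ hfoc]
    simp only [sum_add_distrib, ← smul_sum, sum_sub_distrib, sum_const, card_univ,
      Nat.cast_smul_eq_nsmul]
  subst hθt hbar'
  rw [← sub_eq_zero]
  calc _ = (ρ⁻¹ * (Fintype.card ι : ℝ)⁻¹) • (∑ i, g i + ∑ i, lam i + ρ • (∑ i, θ i
        - (Fintype.card ι : ℝ) • (θbar + ρ⁻¹ • ((Fintype.card ι : ℝ)⁻¹ • ∑ i, lam i)))) := by
        match_scalars <;> field_simp
        ring
    _ = 0 := by rw [hsum, smul_zero]

theorem average_sub_average_le_of_stationary [CompleteSpace E] [Nonempty ι] {L ρ : ℝ}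
    (hL : 0 ≤ L) (hρ : 0 < ρ) {f : ι → E → ℝ} {gf : ι → E → E}
    (hgrad : ∀ i x, HasGradientAt (f i) (gf i x) x)
    (hLip : ∀ i x y, ‖gf i x - gf i y‖ ≤ L * ‖x - y‖) {θt θbart θbar1 : E} {θi1 lam : ι → E}
    (hfoc : ∀ i, gf i (θi1 i) + lam i + ρ • (θi1 i - θt) = 0)
    (hθt : θt = θbart + ρ⁻¹ • ((Fintype.card ι : ℝ)⁻¹ • ∑ i, lam i))
    (hbar1 : θbar1 = (Fintype.card ι : ℝ)⁻¹ • ∑ i, θi1 i) :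
    (Fintype.card ι : ℝ)⁻¹ * ∑ i, f i θbar1 - (Fintype.card ι : ℝ)⁻¹ * ∑ i, f i θbart
      ≤ (L / 2) * (1 + L / ρ) * ((Fintype.card ι : ℝ)⁻¹ * ∑ i, ‖θbart - θi1 i‖ ^ 2)
        - (1 / (2 * ρ)) * ‖(Fintype.card ι : ℝ)⁻¹ • ∑ i, gf i θbart‖ ^ 2 := by
  set g := (Fintype.card ι : ℝ)⁻¹ • ∑ i, gf i θbart
  set G := (Fintype.card ι : ℝ)⁻¹ • ∑ i, gf i (θi1 i)
  set S := (Fintype.card ι : ℝ)⁻¹ * ∑ i, ‖θbart - θi1 i‖ ^ 2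
  have hstep : θbar1 - θbart = -(ρ⁻¹ • G) :=
    average_sub_eq_neg_inv_smul_average_of_stationary hρ.ne' hfoc hθt hbar1
  have hinner : ⟪g, θbar1 - θbart⟫ ≤ -(1 / (2 * ρ)) * ‖g‖ ^ 2 + 1 / (2 * ρ) * (L ^ 2 * S) := by
    rw [hstep]
    refine (inner_neg_inv_smul_le hρ g G).trans ?_
    gcongr
    exact sq_norm_average_sub_average_le hLip θbart θi1
  have hmove : L / 2 * ‖θbar1 - θbart‖ ^ 2 ≤ L / 2 * S := by
    rw [hbar1]
    gcongr
    exact sq_norm_average_sub_le θbart θi1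
  have hdescent := average_sub_average_le_of_lipschitz_gradient hgrad hLip θbart θbar1
  have hrhs : L / 2 * (1 + L / ρ) * S = L / 2 * S + 1 / (2 * ρ) * (L ^ 2 * S) := by ring
  linarith

end Average

/-- One-round descent bound for A-FedPD. With each `f i` `L`-smooth
(gradient map `gf i` is `L`-Lipschitz), exact local first-order stationarity
`∇f_i(θ_i^{t+1}) + λ_i^t + ρ(θ_i^{t+1} − θ^t) = 0`, global average
`θ̄^{t+1} = (1/C)Σ_i θ_i^{t+1}`, and `θ^t = θ̄^t + λ̄^t/ρ`, the average objective
`f = (1/C)Σ_i f_i` satisfies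
`f(θ̄^{t+1}) − f(θ̄^t) ≤ (L/2)(1 + L/ρ)·(1/C)Σ_i‖θ̄^t − θ_i^{t+1}‖² − (1/(2ρ))‖∇f(θ̄^t)‖²`. -/
theorem stmt_11 (d C : ℕ) (hC : 0 < C) (L ρ : ℝ) (hL : 0 ≤ L) (hρ : 0 < ρ)
    (f : Fin C → EuclideanSpace ℝ (Fin d) → ℝ)
    (gf : Fin C → EuclideanSpace ℝ (Fin d) → EuclideanSpace ℝ (Fin d))
    (hgrad : ∀ i x, HasGradientAt (f i) (gf i x) x)
    (hLip : ∀ i x y, ‖gf i x - gf i y‖ ≤ L * ‖x - y‖)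
    (θt θbart θbar1 : EuclideanSpace ℝ (Fin d))
    (θi1 lam : Fin C → EuclideanSpace ℝ (Fin d))
    (hfoc : ∀ i, gf i (θi1 i) + lam i + ρ • (θi1 i - θt) = 0)
    (hθt : θt = θbart + ρ⁻¹ • ((C : ℝ)⁻¹ • ∑ i, lam i))
    (hbar1 : θbar1 = (C : ℝ)⁻¹ • ∑ i, θi1 i) :
    (C : ℝ)⁻¹ * ∑ i, f i θbar1 - (C : ℝ)⁻¹ * ∑ i, f i θbart
      ≤ (L / 2) * (1 + L / ρ) * ((C : ℝ)⁻¹ * ∑ i, ‖θbart - θi1 i‖ ^ 2)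
        - (1 / (2 * ρ)) * ‖(C : ℝ)⁻¹ • ∑ i, gf i θbart‖ ^ 2 := by
  have : Nonempty (Fin C) := ⟨⟨0, hC⟩⟩
  have hcard : (C : ℝ) = Fintype.card (Fin C) := by simp
  rw [hcard] at hθt hbar1 ⊢
  exact average_sub_average_le_of_stationary hL hρ hgrad hLip hfoc hθt hbar1
end
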